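/- In the extended affine Weyl group W̃ of type C̃2, the conjugacy class of s₁s₂s₁s₂ (the longest element of W) equals { t^{2mΛ₁ + nΛ₂} s₁s₂s₁s₂ : m, n ∈ ℤ }. -/

import Mathlib

noncomputable section

open SemidirectProduct

/-- The coweight lattice `P` of `Sp₄` in coordinates `(ε₁, ε₂)`. -/
abbrev L : Type := ℤ × ℤ

/-- The simple reflection `s₁` (for `α₁ = ε₁ - ε₂`) acting on `P`: swap coordinates. -/
def s1lin : AddAut L := AddEquiv.prodComm

/-- The simple reflection `s₂` (for `α₂ = 2ε₂`) acting on `P`: negate second coordinate. -/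
def s2lin : AddAut L := AddEquiv.prodCongr (AddEquiv.refl ℤ) (AddEquiv.neg ℤ)

/-- The multiplicative group structure that `AddAut` carried in the older Mathlib
(now it is an additive group). -/
instance AddAut.oldGroup (A : Type) [Add A] : Group (AddAut A) where
  mul g h := AddEquiv.trans h g
  one := AddEquiv.refl _
  inv := AddEquiv.symm
  mul_assoc _ _ _ := rfl
  one_mul _ := rfl
  mul_one _ := rfl
  inv_mul_cancel := AddEquiv.self_trans_symm

def phi : AddAut L →* MulAut (Multiplicative L) where
  toFun w := AddEquiv.toMultiplicative w
  map_one' := rfl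
  map_mul' _ _ := rfl

/-- The ambient group `P ⋊ Aut(P)`, inside which the extended affine Weyl group
`W̃ = P ⋊ W` of type `C̃₂` lives. -/
abbrev G : Type := Multiplicative L ⋊[phi] AddAut L

/-- Translation element `t^λ`. -/
def t (l : L) : G := inl (Multiplicative.ofAdd l)

def s1 : G := inr s1lin
def s2 : G := inr s2lin

/-- `Λ₁ = α₁ + (1/2)α₂ = ε₁`. -/
def Lam1 : L := (1, 0)
/-- `Λ₂ = α₁ + α₂ = 2ε₂`. -/
def Lam2 : L := (0, 2)
/-- `ε₂ = (1/2)(α₁ + α₂)`. -/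
def eps2 : L := (0, 1)

/-- The affine simple reflection `s₀ = t^{Λ₁} s₁s₂s₁`. -/
def s0 : G := t Lam1 * s1 * s2 * s1
/-- The nontrivial length-zero element `τ = t^{ε₂} s₂s₁s₂`. -/
def tau : G := t eps2 * s2 * s1 * s2
/-- The longest element `w₀ = s₁s₂s₁s₂` of `W`. -/
def w0 : G := s1 * s2 * s1 * s2

/-- The extended affine Weyl group `W̃ = W_a ⋊ Ω` of type `C̃₂`, as a subgroup. -/
def Wtilde : Subgroup G := Subgroup.closure {s0, s1, s2, tau}

/-- The finite Weyl group `W` of type `C₂`, as a group of automorphisms of `P`. -/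
def Wfin : Subgroup (AddAut L) := Subgroup.closure {s1lin, s2lin}

/-- The conjugacy class of `g` under conjugation by the extended affine Weyl group. -/
def conjClass (g : G) : Set G := {h | ∃ x ∈ Wtilde, h = x * g * x⁻¹}

/-- The translation `t^{mΛ₁ + nΛ₂}` for an element `mΛ₁ + nΛ₂` of the coroot lattice `Q`. -/
def tQ (m n : ℤ) : G := t (m • Lam1 + n • Lam2)

end

/-! `w₀` acts on `P` as `-1`, which is central in `W`, so conjugating `w₀` by `t^μ u` gives
`t^{2μ} w₀`. Since `W̃` contains every translation `t^μ`, `μ ∈ P = ℤε₁ ⊕ ℤε₂`, the conjugacy class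
is `{t^{2μ} w₀ : μ ∈ P}`, and `2P = {2mΛ₁ + nΛ₂}`. -/

namespace SemidirectProduct

variable {N H : Type*} [CommGroup N] [Group H] {φ : H →* MulAut N}

theorem mul_inr_mul_inv_eq_inl_sq_mul_inr {h : H} (hc : h ∈ Subgroup.center H)
    (hφ : ∀ n, φ h n = n⁻¹) (x : N ⋊[φ] H) :
    x * inr h * x⁻¹ = inl (x.left ^ 2) * inr h := by
  ext
  · simp [hφ, pow_two]
  · simp [Subgroup.mem_center_iff.mp hc, -map_pow]

end SemidirectProduct

open SemidirectProduct

theorem w0_eq_inr_neg : w0 = inr (AddEquiv.neg L) := by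
  simp only [w0, s1, s2, ← map_mul]
  rfl

theorem AddEquiv.neg_mem_center_addAut (A : Type) [AddCommGroup A] :
    AddEquiv.neg A ∈ Subgroup.center (AddAut A) :=
  Subgroup.mem_center_iff.mpr fun u => AddEquiv.ext fun x => map_neg u x

theorem conj_w0 (x : G) : x * w0 * x⁻¹ = t (2 • Multiplicative.toAdd x.left) * w0 := by
  rw [w0_eq_inr_neg, mul_inr_mul_inv_eq_inl_sq_mul_inr (AddEquiv.neg_mem_center_addAut L)
    (fun _ => rfl)]
  rfl

theorem t_zsmul_add_zsmul (a b : L) (m n : ℤ) : t (m • a + n • b) = t a ^ m * t b ^ n := by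
  simp only [t, ← map_zpow, ← map_mul]
  rfl

theorem t_mem_Wtilde (l : L) : t l ∈ Wtilde := by
  obtain ⟨hs0, hs1, hs2, htau⟩ : s0 ∈ Wtilde ∧ s1 ∈ Wtilde ∧ s2 ∈ Wtilde ∧ tau ∈ Wtilde := by
    refine ⟨?_, ?_, ?_, ?_⟩ <;> exact Subgroup.subset_closure (by simp)
  have hLam1 : t Lam1 ∈ Wtilde := by
    rw [show t Lam1 = s0 * (s1 * s2 * s1)⁻¹ by rw [s0]; group]
    exact mul_mem hs0 (inv_mem (mul_mem (mul_mem hs1 hs2) hs1))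
  have heps2 : t eps2 ∈ Wtilde := by
    rw [show t eps2 = tau * (s2 * s1 * s2)⁻¹ by rw [tau]; group]
    exact mul_mem htau (inv_mem (mul_mem (mul_mem hs2 hs1) hs2))
  rw [show l = l.1 • Lam1 + l.2 • eps2 by simp [Lam1, eps2], t_zsmul_add_zsmul]
  exact mul_mem (zpow_mem hLam1 _) (zpow_mem heps2 _)

theorem tQ_two_mul (m n : ℤ) : tQ (2 * m) n = t (2 • (m, n)) := by
  simp only [tQ, Lam1, Lam2]
  congr 1
  ext <;> simp [mul_comm]

/-- The conjugacy class of the longest element `s₁s₂s₁s₂` of `W` equals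
`{ t^{2mΛ₁+nΛ₂} s₁s₂s₁s₂ : m, n ∈ ℤ }`. -/
theorem conjClass_w0 :
    conjClass w0 = {g : G | ∃ m n : ℤ, g = tQ (2 * m) n * w0} := by
  ext g
  constructor
  · rintro ⟨x, -, rfl⟩
    exact ⟨(Multiplicative.toAdd x.left).1, (Multiplicative.toAdd x.left).2,
      by rw [conj_w0, tQ_two_mul]⟩
  · rintro ⟨m, n, rfl⟩
    exact ⟨t (m, n), t_mem_Wtilde _, by rw [conj_w0, tQ_two_mul]; rfl⟩
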